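/- Let f be a piecewise linear increasing homeomorphism of ℝ whose slopes all lie in a multiplicative subgroup Λ of the positive reals and whose breakpoints lie in A = ℤ[Λ]. Then for any points a < c in A, one has f(c) − f(a) ≡ c − a modulo the additive subgroup IΛ·A generated by all elements (λ−1)·a with λ ∈ Λ, a ∈ A. -/

import Mathlib

theorem AddSubgroup.sub_mem_of_forall_succ_sub_mem {G : Type*} [AddCommGroup G]
    (I : AddSubgroup G) (g : ℕ → G) (n : ℕ) (h : ∀ i < n, g (i + 1) - g i ∈ I) :
    g n - g 0 ∈ I := by
  rw [← Finset.sum_range_sub]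
  exact I.sum_mem fun i hi => h i (Finset.mem_range.mp hi)

theorem sub_sub_sub_eq_of_affine_on_Icc {R : Type*} [CommRing R] [Preorder R]
    {f : R → R} {u v l : R} (huv : u ≤ v)
    (hf : ∀ t ∈ Set.Icc u v, f t = l * (t - u) + f u) :
    (f v - v) - (f u - u) = (l - 1) * (v - u) := by
  rw [hf v ⟨huv, le_rfl⟩]
  ring

open Set in
/-- The PL structure of `f` on `[a,c]` is encoded by a partition `x 0 = a < x 1 < ⋯ < x n = c`
with points in `A` and slopes `lam i ∈ Λ`. -/
theorem bieri_strebel_only_if_general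
    (Λ : Set ℝ)
    (A : Subring ℝ)
    (I : AddSubgroup ℝ)
    (hI : I = AddSubgroup.closure {x : ℝ | ∃ l ∈ Λ, ∃ a ∈ A, x = (l - 1) * a})
    (f : ℝ → ℝ)
    (a c : ℝ)
    (n : ℕ) (x : ℕ → ℝ) (lam : ℕ → ℝ)
    (hx0 : x 0 = a) (hxn : x n = c)
    (hxlt : ∀ i < n, x i < x (i + 1))
    (hxA : ∀ i ≤ n, x i ∈ A)
    (hlam : ∀ i < n, lam i ∈ Λ)
    (hpl : ∀ i < n, ∀ t ∈ Icc (x i) (x (i + 1)), f t = lam i * (t - x i) + f (x i)) :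
    (f c - f a) - (c - a) ∈ I := by
  subst hx0 hxn hI
  have hstep : ∀ i < n, (f (x (i + 1)) - x (i + 1)) - (f (x i) - x i) ∈
      AddSubgroup.closure {x : ℝ | ∃ l ∈ Λ, ∃ a ∈ A, x = (l - 1) * a} := fun i hi =>
    AddSubgroup.subset_closure ⟨lam i, hlam i hi, x (i + 1) - x i,
      A.sub_mem (hxA (i + 1) hi) (hxA i hi.le),
      sub_sub_sub_eq_of_affine_on_Icc (hxlt i hi).le (hpl i hi)⟩
  convert AddSubgroup.sub_mem_of_forall_succ_sub_mem _ (fun k => f (x k) - x k) n hstep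
    using 1
  ring

open Set in
/-- Bieri–Strebel: easy direction. A PL increasing homeomorphism `f` of `ℝ` with
slopes in a multiplicative subgroup `Λ` of `(0,∞)` and breakpoints in `A = ℤ[Λ]`
satisfies `f c - f a ≡ c - a (mod IΛ·A)` for `a < c` in `A`.
The PL structure on `[a,c]` is encoded by a partition `x 0 = a < x 1 < ⋯ < x n = c`
with points in `A` and slopes `lam i ∈ Λ`. -/
theorem bieri_strebel_only_if
    (Λ : Set ℝ) (hΛpos : ∀ l ∈ Λ, 0 < l) (hΛone : (1 : ℝ) ∈ Λ)
    (hΛmul : ∀ l ∈ Λ, ∀ m ∈ Λ, l * m ∈ Λ) (hΛinv : ∀ l ∈ Λ, l⁻¹ ∈ Λ)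
    (A : Subring ℝ) (hA : A = Subring.closure Λ)
    (I : AddSubgroup ℝ)
    (hI : I = AddSubgroup.closure {x : ℝ | ∃ l ∈ Λ, ∃ a ∈ A, x = (l - 1) * a})
    (f : ℝ → ℝ) (hmono : StrictMono f) (hbij : Function.Bijective f) (hcont : Continuous f)
    (a c : ℝ) (ha : a ∈ A) (hc : c ∈ A) (hac : a < c)
    (n : ℕ) (hn : 0 < n) (x : ℕ → ℝ) (lam : ℕ → ℝ)
    (hx0 : x 0 = a) (hxn : x n = c)
    (hxlt : ∀ i < n, x i < x (i + 1))
    (hxA : ∀ i ≤ n, x i ∈ A)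
    (hlam : ∀ i < n, lam i ∈ Λ)
    (hpl : ∀ i < n, ∀ t ∈ Icc (x i) (x (i + 1)), f t = lam i * (t - x i) + f (x i)) :
    (f c - f a) - (c - a) ∈ I :=
  bieri_strebel_only_if_general Λ A I hI f a c n x lam hx0 hxn hxlt hxA hlam hpl
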